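/- Let E_1,…,E_m and F_1,…,F_m, R_1,…,R_r be Kraus operators of quantum channels 𝓔(ρ) = Σ E_i ρ E_i† and 𝓕(ρ) = Σ F_i ρ F_i† + Σ R_k ρ R_k†. Suppose the identity I can be written as I = Σ_{i=1}^m χ_i E_i† F_i with complex coefficients χ_i, and set χ = max_i |χ_i| > 0. Then for all pure states ψ, φ: F(𝓔(|ψ⟩⟨ψ|), 𝓕(|φ⟩⟨φ|)) ≥ (1/χ)|⟨ψ|φ⟩|. -/

import Mathlib

open Matrix
open scoped ComplexOrder
noncomputable section

open Classical in
/-- `√A` for positive semidefinite `A` (junk value `0` otherwise). -/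
noncomputable def matSqrt {d : ℕ} (A : Matrix (Fin d) (Fin d) ℂ) : Matrix (Fin d) (Fin d) ℂ :=
  if h : A.PosSemidef then
    (h.1.eigenvectorUnitary : Matrix (Fin d) (Fin d) ℂ) *
      diagonal ((↑) ∘ (fun x : ℝ => Real.sqrt x) ∘ h.1.eigenvalues) *
      (star h.1.eigenvectorUnitary : Matrix (Fin d) (Fin d) ℂ)
  else 0

/-- Trace norm `Tr|A| = Tr √(AᴴA)`. -/
noncomputable def traceNorm {d : ℕ} (A : Matrix (Fin d) (Fin d) ℂ) : ℝ :=
  ((matSqrt (Aᴴ * A)).trace).re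

/-- Fidelity `F(ρ,σ) = Tr √(√ρ σ √ρ)`. -/
noncomputable def fidelity {d : ℕ} (ρ σ : Matrix (Fin d) (Fin d) ℂ) : ℝ :=
  ((matSqrt (matSqrt ρ * σ * matSqrt ρ)).trace).re

/-- A density matrix: positive semidefinite with trace one. -/
def IsDensity {d : ℕ} (ρ : Matrix (Fin d) (Fin d) ℂ) : Prop :=
  ρ.PosSemidef ∧ ρ.trace = 1

open Classical in
noncomputable def msqrt {n : Type*} [Fintype n] [DecidableEq n]
    (A : Matrix n n ℂ) : Matrix n n ℂ :=
  if h : A.PosSemidef then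
    (h.1.eigenvectorUnitary : Matrix n n ℂ) *
      diagonal ((↑) ∘ (fun x : ℝ => Real.sqrt x) ∘ h.1.eigenvalues) *
      (star h.1.eigenvectorUnitary : Matrix n n ℂ)
  else 0

variable {n : Type*} [Fintype n] [DecidableEq n]

lemma msqrt_of_psd {A : Matrix n n ℂ} (h : A.PosSemidef) : msqrt A =
    (h.1.eigenvectorUnitary : Matrix n n ℂ) *
      diagonal ((↑) ∘ (fun x : ℝ => Real.sqrt x) ∘ h.1.eigenvalues) *
      (star h.1.eigenvectorUnitary : Matrix n n ℂ) := dif_pos h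

open scoped MatrixOrder in
lemma msqrt_eq_cfcSqrt {A : Matrix n n ℂ} (h : A.PosSemidef) : msqrt A = CFC.sqrt A := by
  rw [CFC.sqrt_eq_real_sqrt A h.nonneg, cfcₙ_eq_cfc, h.1.cfc_eq, IsHermitian.cfc,
    Unitary.conjStarAlgAut_apply,
    msqrt_of_psd h]
  rfl

open scoped MatrixOrder in
lemma msqrt_herm {A : Matrix n n ℂ} (h : A.PosSemidef) : (msqrt A)ᴴ = msqrt A := by
  rw [msqrt_eq_cfcSqrt h]; exact (CFC.sqrt_nonneg A).posSemidef.1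

open scoped MatrixOrder in
lemma msqrt_mul_self' {A : Matrix n n ℂ} (h : A.PosSemidef) : msqrt A * msqrt A = A := by
  rw [msqrt_eq_cfcSqrt h]; exact CFC.sqrt_mul_sqrt_self A h.nonneg

open scoped MatrixOrder in
lemma msqrt_unique' {A S : Matrix n n ℂ} (hS : S.PosSemidef) (h : S * S = A) : S = msqrt A := by
  have hA : A.PosSemidef := h ▸ (by simpa [hS.1.eq] using posSemidef_self_mul_conjTranspose S)
  rw [msqrt_eq_cfcSqrt hA]; exact (CFC.sqrt_unique h hS.nonneg).symm

lemma herm_diag {A : Matrix n n ℂ} (hH : A.IsHermitian) :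
    star (hH.eigenvectorUnitary : Matrix n n ℂ) * A * (hH.eigenvectorUnitary : Matrix n n ℂ)
      = diagonal (RCLike.ofReal ∘ hH.eigenvalues) := by
  have := hH.conjStarAlgAut_star_eigenvectorUnitary
  rw [Unitary.conjStarAlgAut_apply] at this
  simpa using this

lemma trace_msqrt {A : Matrix n n ℂ} (hA : A.PosSemidef) :
    (msqrt A).trace = ∑ i, (Real.sqrt (hA.1.eigenvalues i) : ℂ) := by
  rw [msqrt_of_psd hA, trace_mul_cycle,
    Unitary.coe_star_mul_self, one_mul, trace_diagonal]
  rfl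

lemma abs_trace_le_trace_msqrt (Z : Matrix n n ℂ) :
    ‖Z.trace‖ ≤ ((msqrt (Zᴴ * Z)).trace).re := by
  have hG : (Zᴴ * Z).PosSemidef := posSemidef_conjTranspose_mul_self Z
  have hH := hG.1
  set U : Matrix n n ℂ := (hH.eigenvectorUnitary : Matrix n n ℂ) with hU
  set lam := hH.eigenvalues with hlam
  have htr : (msqrt (Zᴴ * Z)).trace = ∑ i, (Real.sqrt (lam i) : ℂ) := trace_msqrt hG
  have hre : ((msqrt (Zᴴ * Z)).trace).re = ∑ i, Real.sqrt (lam i) := by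
    rw [htr]; push_cast; simp
  rw [hre]
  -- trace Z = trace (star U * Z * U)
  have hUU : star U * U = 1 := Unitary.coe_star_mul_self _
  have hUUs : U * star U = 1 := Unitary.coe_mul_star_self _
  have htrZ : Z.trace = (star U * Z * U).trace := by
    rw [trace_mul_cycle, hUUs, one_mul]
  have hdiag : star U * (Zᴴ * Z) * U = diagonal (RCLike.ofReal ∘ lam) :=
    herm_diag hH
  rw [htrZ, trace]
  refine le_trans (norm_sum_le _ _) (Finset.sum_le_sum fun j _ => ?_)
  -- columns
  set u : EuclideanSpace ℂ n := WithLp.toLp 2 (fun x => U x j) with hu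
  set w : EuclideanSpace ℂ n := WithLp.toLp 2 (fun x => (Z * U) x j) with hw
  have hdiagEntry : (star U * (Zᴴ * Z) * U) j j = (lam j : ℂ) := by
    rw [hdiag]; simp [diagonal_apply_eq]
  have hWentry : (star U * Z * U) j j = ∑ x, star (u x) * w x := by
    rw [mul_assoc, Matrix.mul_apply]
    rfl
  have hinner : (inner ℂ u w : ℂ) = (star U * Z * U) j j := by
    rw [hWentry, PiLp.inner_apply]
    simp only [RCLike.inner_apply', starRingEnd_apply]
  have hnormw : ‖w‖ ^ 2 = lam j := by
    have h2 : (∑ x, (starRingEnd ℂ) (w x) * w x) = (lam j : ℂ) := by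
      rw [← hdiagEntry, show star U * (Zᴴ * Z) * U = (Z * U)ᴴ * (Z * U) by
        rw [conjTranspose_mul]; noncomm_ring, Matrix.mul_apply]
      simp only [conjTranspose_apply, hw, starRingEnd_apply]
    have : (inner ℂ w w : ℂ) = (lam j : ℂ) := by
      rw [PiLp.inner_apply]; simp only [RCLike.inner_apply']; exact h2
    rw [inner_self_eq_norm_sq_to_K, ← RCLike.ofReal_pow] at this
    exact RCLike.ofReal_inj.mp this
  have hnormu : ‖u‖ = 1 := by
    have h1 : (∑ x, (starRingEnd ℂ) (u x) * u x) = (1 : ℂ) := by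
      have := congrFun (congrFun hUU j) j
      simpa [Matrix.mul_apply, Matrix.star_apply, one_apply, hu] using this
    have : (inner ℂ u u : ℂ) = 1 := by
      rw [PiLp.inner_apply]; simp only [RCLike.inner_apply']; exact h1
    rw [inner_self_eq_norm_sq_to_K, ← RCLike.ofReal_pow,
      show (1 : ℂ) = ((1 : ℝ) : ℂ) by norm_num] at this
    have h2 : ‖u‖ ^ 2 = 1 := RCLike.ofReal_inj.mp this
    nlinarith [norm_nonneg u]
  calc ‖(star U * Z * U) j j‖ = ‖(inner ℂ u w : ℂ)‖ := by
        rw [hinner]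
    _ ≤ ‖u‖ * ‖w‖ := norm_inner_le_norm u w
    _ = ‖w‖ := by rw [hnormu, one_mul]
    _ = Real.sqrt (lam j) := by
        rw [← hnormw, Real.sqrt_sq (norm_nonneg w)]

lemma trace_msqrt_comm {p q : Type*} [Fintype p] [DecidableEq p] [Fintype q] [DecidableEq q]
    (A : Matrix p q ℂ) : (msqrt (Aᴴ * A)).trace = (msqrt (A * Aᴴ)).trace := by
  have hG : (Aᴴ * A).PosSemidef := posSemidef_conjTranspose_mul_self A
  have hH := hG.1
  set U : Matrix q q ℂ := (hH.eigenvectorUnitary : Matrix q q ℂ) with hU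
  set lam := hH.eigenvalues with hlam
  have hlam0 : ∀ j, 0 ≤ lam j := fun j => hG.eigenvalues_nonneg j
  have hUU : star U * U = 1 := Unitary.coe_star_mul_self _
  have hUUs : U * star U = 1 := Unitary.coe_mul_star_self _
  set B : Matrix p q ℂ := A * U with hB
  have hBB : Bᴴ * B = diagonal (fun j => (lam j : ℂ)) := by
    have := herm_diag hH
    rw [hB, conjTranspose_mul]
    calc Uᴴ * Aᴴ * (A * U) = star U * (Aᴴ * A) * U := by
          rw [show (star U : Matrix q q ℂ) = Uᴴ from rfl]
          simp only [Matrix.mul_assoc]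
      _ = diagonal (RCLike.ofReal ∘ lam) := this
      _ = diagonal (fun j => (lam j : ℂ)) := rfl
  -- columns of B with zero eigenvalue vanish
  have hBcol : ∀ j, lam j = 0 → ∀ x, B x j = 0 := by
    intro j hj x
    have hentry : (Bᴴ * B) j j = (lam j : ℂ) := by rw [hBB]; simp
    rw [Matrix.mul_apply] at hentry
    simp only [conjTranspose_apply] at hentry
    have hsum : ∑ y, Complex.normSq (B y j) = 0 := by
      have : ((∑ y, Complex.normSq (B y j) : ℝ) : ℂ) = 0 := by
        push_cast
        calc ∑ y, ((Complex.normSq (B y j) : ℝ) : ℂ)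
            = ∑ y, star (B y j) * B y j := by
              refine Finset.sum_congr rfl fun y _ => ?_
              rw [Complex.star_def, Complex.normSq_eq_conj_mul_self]
          _ = 0 := by rw [hentry, hj]; norm_num
      exact_mod_cast this
    have := (Finset.sum_eq_zero_iff_of_nonneg
      (fun y _ => Complex.normSq_nonneg (B y j))).mp hsum x (Finset.mem_univ x)
    exact Complex.normSq_eq_zero.mp this
  set g : q → ℝ := fun j => (Real.sqrt (lam j))⁻¹ with hg
  set S : Matrix p p ℂ := B * diagonal (fun j => (g j : ℂ)) * Bᴴ with hSdef
  have hBe : ∀ (e : q → ℂ), (∀ j, lam j ≠ 0 → e j = 1) → B * diagonal e * Bᴴ = B * Bᴴ := by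
    intro e he
    have : B * diagonal e = B := by
      ext x j
      rw [Matrix.mul_apply]
      rw [Finset.sum_eq_single j (fun b _ hb => by rw [diagonal_apply_ne _ hb, mul_zero])
        (fun h => absurd (Finset.mem_univ j) h)]
      rcases eq_or_ne (lam j) 0 with h0 | h0
      · simp [hBcol j h0 x]
      · simp [he j h0]
    rw [this]
  have hS2 : S * S = A * Aᴴ := by
    have h1 : S * S = B * (diagonal (fun j => (g j : ℂ)) * (Bᴴ * B) *
        diagonal (fun j => (g j : ℂ))) * Bᴴ := by
      rw [hSdef]; simp only [Matrix.mul_assoc]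
    rw [h1, hBB, diagonal_mul_diagonal, diagonal_mul_diagonal]
    have he : ∀ j, lam j ≠ 0 → (g j : ℂ) * (lam j : ℂ) * (g j : ℂ) = 1 := by
      intro j h0
      have hs : Real.sqrt (lam j) ≠ 0 := by
        simpa [Real.sqrt_eq_zero', not_le] using lt_of_le_of_ne (hlam0 j) (Ne.symm h0)
      have hr : g j * lam j * g j = 1 := by
        rw [hg]
        field_simp
        rw [Real.sq_sqrt (hlam0 j)]
      exact_mod_cast hr
    rw [hBe _ (fun j h0 => he j h0), hB, conjTranspose_mul,
      show (U : Matrix q q ℂ)ᴴ = star U from rfl]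
    calc A * U * (star U * Aᴴ) = A * (U * star U * Aᴴ) := by
          simp only [Matrix.mul_assoc]
      _ = A * Aᴴ := by rw [hUUs, Matrix.one_mul]
  have hSpsd : S.PosSemidef := by
    have hgnn : ∀ j, 0 ≤ g j := fun j => inv_nonneg.mpr (Real.sqrt_nonneg _)
    set C : Matrix p q ℂ := B * diagonal (fun j => (Real.sqrt (g j) : ℂ)) with hC
    have hdd : diagonal (fun j => (Real.sqrt (g j) : ℂ)) *
        diagonal (fun j => (Real.sqrt (g j) : ℂ)) = diagonal (fun j => (g j : ℂ)) := by
      have hfun : (fun j => (Real.sqrt (g j) : ℂ) * (Real.sqrt (g j) : ℂ))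
          = fun j => (g j : ℂ) := funext fun j => by
        rw [← Complex.ofReal_mul, Real.mul_self_sqrt (hgnn j)]
      rw [diagonal_mul_diagonal, hfun]
    have hstar : star (fun j => (Real.sqrt (g j) : ℂ)) = fun j => (Real.sqrt (g j) : ℂ) := by
      funext j; simp [Complex.star_def, Complex.conj_ofReal]
    have hCC : C * Cᴴ = S := by
      rw [hC, conjTranspose_mul, diagonal_conjTranspose, hstar, hSdef]
      simp only [Matrix.mul_assoc]
      rw [← Matrix.mul_assoc (diagonal _) (diagonal _) Bᴴ, hdd]
    rw [← hCC]
    exact posSemidef_self_mul_conjTranspose C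
  have hAA : (A * Aᴴ).PosSemidef := posSemidef_self_mul_conjTranspose A
  have hSsqrt : S = msqrt (A * Aᴴ) := msqrt_unique' hSpsd hS2
  have htrS : S.trace = ∑ j, (Real.sqrt (lam j) : ℂ) := by
    rw [hSdef, trace_mul_cycle, hBB, diagonal_mul_diagonal, trace_diagonal]
    refine Finset.sum_congr rfl fun j _ => ?_
    have hr : lam j * g j = Real.sqrt (lam j) := by
      rcases eq_or_ne (lam j) 0 with h0 | h0
      · simp [h0, hg]
      · have hs : Real.sqrt (lam j) ≠ 0 := by
          simpa [Real.sqrt_eq_zero', not_le] using lt_of_le_of_ne (hlam0 j) (Ne.symm h0)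
        rw [hg]
        field_simp
        rw [Real.sq_sqrt (hlam0 j)]
    exact_mod_cast hr
  rw [trace_msqrt hG, ← hSsqrt, htrS]

lemma conj_vecMulVec {d : ℕ} (B : Matrix (Fin d) (Fin d) ℂ) (v : Fin d → ℂ) :
    B * vecMulVec v (star v) * Bᴴ = vecMulVec (B *ᵥ v) (star (B *ᵥ v)) := by
  ext x y
  simp only [Matrix.mul_apply, vecMulVec_apply, conjTranspose_apply, mulVec, dotProduct,
    Pi.star_apply, star_sum, star_mul']
  rw [Finset.sum_mul_sum]
  rw [Finset.sum_comm]
  simp only [Finset.sum_mul, Finset.mul_sum]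
  refine Finset.sum_congr rfl fun t _ => Finset.sum_congr rfl fun u _ => by ring

lemma matSqrt_eq_msqrt {d : ℕ} (A : Matrix (Fin d) (Fin d) ℂ) : matSqrt A = msqrt A := rfl

theorem fidelity_contraction_bound {d m r : ℕ}
    (E F : Fin (m + 1) → Matrix (Fin d) (Fin d) ℂ)
    (R : Fin r → Matrix (Fin d) (Fin d) ℂ)
    (hE : ∑ i, (E i)ᴴ * E i = 1)
    (hF : (∑ i, (F i)ᴴ * F i) + (∑ k, (R k)ᴴ * R k) = 1)
    (χv : Fin (m + 1) → ℂ)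
    (hI : (1 : Matrix (Fin d) (Fin d) ℂ) = ∑ i, χv i • ((E i)ᴴ * F i))
    (χ : ℝ)
    (hχ : χ = Finset.univ.sup' Finset.univ_nonempty fun i => ‖χv i‖)
    (hχpos : 0 < χ)
    (ψ φ : Fin d → ℂ) (hψ : star ψ ⬝ᵥ ψ = 1) (hφ : star φ ⬝ᵥ φ = 1) :
    fidelity (∑ i, E i * vecMulVec ψ (star ψ) * (E i)ᴴ)
        ((∑ i, F i * vecMulVec φ (star φ) * (F i)ᴴ)
          + ∑ k, R k * vecMulVec φ (star φ) * (R k)ᴴ)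
      ≥ (1 / χ) * ‖star ψ ⬝ᵥ φ‖ := by
  have hle : ∀ i, ‖χv i‖ ≤ χ := fun i => by
    rw [hχ]; exact Finset.le_sup' (fun i => ‖χv i‖) (Finset.mem_univ i)
  have hχne : (χ : ℂ) ≠ 0 := by exact_mod_cast hχpos.ne'
  set a : Fin (m+1) → (Fin d → ℂ) := fun i => E i *ᵥ ψ with ha
  set b : Fin (m+1) → (Fin d → ℂ) := fun i => F i *ᵥ φ with hb
  set c : Fin r → (Fin d → ℂ) := fun k => R k *ᵥ φ with hc
  set ρ := ∑ i, E i * vecMulVec ψ (star ψ) * (E i)ᴴ with hρ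
  set σ := (∑ i, F i * vecMulVec φ (star φ) * (F i)ᴴ)
    + ∑ k, R k * vecMulVec φ (star φ) * (R k)ᴴ with hσ
  set s : Fin (m+1) → ℝ := fun i => Real.sqrt (1 - ‖χv i‖^2 / χ^2) with hs
  set M : Matrix (Fin d) (Fin (m+1) ⊕ (Fin (m+1) ⊕ Fin r)) ℂ := fun x j =>
    Sum.elim (fun i => ((starRingEnd ℂ) (χv i) / (χ:ℂ)) * a i x)
      (Sum.elim (fun i => (s i : ℂ) * a i x) (fun _ => 0)) j with hM
  set N : Matrix (Fin d) (Fin (m+1) ⊕ (Fin (m+1) ⊕ Fin r)) ℂ := fun x j =>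
    Sum.elim (fun i => b i x) (Sum.elim (fun _ => 0) (fun k => c k x)) j with hN
  -- M Mᴴ = ρ
  have hMM : M * Mᴴ = ρ := by
    ext x y
    have hρxy : ρ x y = ∑ i, a i x * star (a i y) := by
      rw [hρ, Matrix.sum_apply]
      refine Finset.sum_congr rfl fun i _ => ?_
      rw [conj_vecMulVec]
      simp [vecMulVec_apply, ha]
    rw [Matrix.mul_apply, Fintype.sum_sum_type, Fintype.sum_sum_type, hρxy]
    simp only [conjTranspose_apply]
    simp only [conjTranspose_apply, hM, Sum.elim_inl, Sum.elim_inr, star_zero, mul_zero,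
      zero_mul, Finset.sum_const_zero, add_zero]
    rw [← Finset.sum_add_distrib]
    refine Finset.sum_congr rfl fun i _ => ?_
    have habs : ‖χv i‖^2 ≤ χ^2 := by
      nlinarith [hle i, norm_nonneg (χv i)]
    have hs2 : (s i)^2 = 1 - ‖χv i‖^2/χ^2 := Real.sq_sqrt
      (by rw [sub_nonneg, div_le_one (by positivity)]; exact habs)
    have hcoef : (starRingEnd ℂ) (χv i) / (χ:ℂ) * (χv i / (χ:ℂ))
        + (s i : ℂ) * (s i : ℂ) = 1 := by
      have h1 : (starRingEnd ℂ) (χv i) / (χ:ℂ) * (χv i / (χ:ℂ))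
          = ((‖χv i‖^2 / χ^2 : ℝ) : ℂ) := by
        rw [div_mul_div_comm, ← Complex.normSq_eq_conj_mul_self]
        push_cast [Complex.sq_norm]
        ring
      have h2 : (s i : ℂ) * (s i : ℂ) = ((1 - ‖χv i‖^2 / χ^2 : ℝ) : ℂ) := by
        rw [← Complex.ofReal_mul]
        congr 1
        rw [← sq, hs2]
      rw [h1, h2, ← Complex.ofReal_add,
        show ‖χv i‖^2/χ^2 + (1 - ‖χv i‖^2/χ^2) = 1 by ring,
        Complex.ofReal_one]
    simp only [star_mul', star_div₀, Complex.star_def, Complex.conj_conj, Complex.conj_ofReal]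
    linear_combination (a i x * (starRingEnd ℂ) (a i y)) * hcoef
  -- N Nᴴ = σ
  have hNN : N * Nᴴ = σ := by
    ext x y
    have hσxy : σ x y = (∑ i, b i x * star (b i y)) + ∑ k, c k x * star (c k y) := by
      rw [hσ, Matrix.add_apply, Matrix.sum_apply, Matrix.sum_apply]
      congr 1
      · exact Finset.sum_congr rfl fun i _ => by rw [conj_vecMulVec]; simp [vecMulVec_apply, hb]
      · exact Finset.sum_congr rfl fun k _ => by rw [conj_vecMulVec]; simp [vecMulVec_apply, hc]
    rw [Matrix.mul_apply, Fintype.sum_sum_type, Fintype.sum_sum_type, hσxy]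
    simp only [conjTranspose_apply]
    simp only [conjTranspose_apply, hN, Sum.elim_inl, Sum.elim_inr, star_zero, mul_zero,
      zero_mul, Finset.sum_const_zero, zero_add]
  -- trace of Mᴴ N
  have htrZ : (Mᴴ * N).trace = ((1/χ : ℝ) : ℂ) * (star ψ ⬝ᵥ φ) := by
    have hdot : ∀ i, (∑ x, star (a i x) * b i x)
        = star ψ ⬝ᵥ (((E i)ᴴ * F i) *ᵥ φ) := by
      intro i
      rw [← mulVec_mulVec, dotProduct_mulVec, ← star_mulVec]
      simp [dotProduct, ha, hb]
    have hmv : (∑ i, χv i • ((E i)ᴴ * F i)) *ᵥ φ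
        = ∑ i, χv i • (((E i)ᴴ * F i) *ᵥ φ) := by
      ext x
      rw [Finset.sum_apply]
      simp only [Matrix.mulVec, dotProduct, Matrix.sum_apply, Matrix.smul_apply,
        Pi.smul_apply, smul_eq_mul, Finset.sum_mul, Finset.mul_sum]
      rw [Finset.sum_comm]
      exact Finset.sum_congr rfl fun i _ => Finset.sum_congr rfl fun y _ => by ring
    have hds : star ψ ⬝ᵥ (∑ i, χv i • (((E i)ᴴ * F i) *ᵥ φ))
        = ∑ i, χv i * (star ψ ⬝ᵥ (((E i)ᴴ * F i) *ᵥ φ)) := by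
      simp only [dotProduct, Finset.sum_apply, Pi.smul_apply, smul_eq_mul, Finset.mul_sum]
      rw [Finset.sum_comm]
      exact Finset.sum_congr rfl fun i _ => Finset.sum_congr rfl fun x _ => by ring
    have hsum : ∑ i, χv i * (star ψ ⬝ᵥ (((E i)ᴴ * F i) *ᵥ φ)) = star ψ ⬝ᵥ φ := by
      rw [← hds, ← hmv, ← hI, Matrix.one_mulVec]
    rw [Matrix.trace, Fintype.sum_sum_type, Fintype.sum_sum_type]
    simp only [Matrix.diag_apply, Matrix.mul_apply, conjTranspose_apply]
    simp only [Matrix.diag_apply, Matrix.mul_apply, conjTranspose_apply, hM, hN,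
      Sum.elim_inl, Sum.elim_inr, star_zero, mul_zero, zero_mul, Finset.sum_const_zero,
      add_zero, star_mul', star_div₀, Complex.star_def, Complex.conj_conj,
      Complex.conj_ofReal]
    calc ∑ i, ∑ x, χv i / (χ:ℂ) * (starRingEnd ℂ) (a i x) * b i x
        = ∑ i, (1/(χ:ℂ)) * (χv i * (star ψ ⬝ᵥ (((E i)ᴴ * F i) *ᵥ φ))) := by
          refine Finset.sum_congr rfl fun i _ => ?_
          rw [← hdot i, Finset.mul_sum, Finset.mul_sum]
          refine Finset.sum_congr rfl fun x _ => ?_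
          rw [Complex.star_def]
          ring
      _ = (1/(χ:ℂ)) * ∑ i, χv i * (star ψ ⬝ᵥ (((E i)ᴴ * F i) *ᵥ φ)) := by
          rw [Finset.mul_sum]
      _ = ((1/χ : ℝ) : ℂ) * (star ψ ⬝ᵥ φ) := by rw [hsum]; push_cast; ring
  -- assemble
  have hρpsd : ρ.PosSemidef := hMM ▸ posSemidef_self_mul_conjTranspose M
  set Sρ := msqrt ρ with hSρ
  have hSρh : Sρᴴ = Sρ := by rw [hSρ]; exact msqrt_herm hρpsd
  have hSρm : Sρ * Sρ = ρ := by rw [hSρ]; exact msqrt_mul_self' hρpsd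
  set Y := Sρ * N with hY
  have hY1 : Y * Yᴴ = Sρ * σ * Sρ := by
    rw [hY, conjTranspose_mul, hSρh, ← hNN]
    simp only [Matrix.mul_assoc]
  have hY2 : Yᴴ * Y = (Mᴴ * N)ᴴ * (Mᴴ * N) := by
    rw [hY, conjTranspose_mul, hSρh, conjTranspose_mul, conjTranspose_conjTranspose]
    calc Nᴴ * Sρ * (Sρ * N) = Nᴴ * (Sρ * (Sρ * N)) := by simp only [Matrix.mul_assoc]
      _ = Nᴴ * (Sρ * Sρ * N) := by simp only [Matrix.mul_assoc]
      _ = Nᴴ * (M * Mᴴ * N) := by rw [hSρm, hMM]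
      _ = Nᴴ * M * (Mᴴ * N) := by simp only [Matrix.mul_assoc]
  have hfid : fidelity ρ σ = ((msqrt (Yᴴ * Y)).trace).re := by
    rw [fidelity, matSqrt_eq_msqrt, matSqrt_eq_msqrt, ← hSρ, ← hY1, ← trace_msqrt_comm Y]
  calc (1/χ) * ‖star ψ ⬝ᵥ φ‖ = ‖(Mᴴ * N).trace‖ := by
        rw [htrZ, norm_mul, Complex.norm_real, Real.norm_eq_abs,
          abs_of_pos (by positivity : (0:ℝ) < 1/χ)]
    _ ≤ ((msqrt ((Mᴴ * N)ᴴ * (Mᴴ * N))).trace).re := abs_trace_le_trace_msqrt _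
    _ = fidelity ρ σ := by rw [hfid, hY2]
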